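/- Determinism of FastSet: interleaving equivalence implies weak equivalence. For all claim sequences γ, γ', if γ ≡ γ' then γ ⇓ γ'. In particular, for every state s with γ↓s and γ'↓s, ⟦γ⟧s = ⟦γ'⟧s. -/

import Mathlib

/-- Semantics of a sequence of claims: process claims left to right,
undefined (`none`) as soon as one claim is undefined. -/
def run {State Claim : Type*} (sem : Claim → State → Option State) :
    List Claim → State → Option State
  | [], s => some s
  | c :: γ, s => (sem c s).bind (run sem γ)

/-- A claim sequence is valid (defined) in a state. -/
def Defined {State Claim : Type*} (sem : Claim → State → Option State)
    (γ : List Claim) (s : State) : Prop :=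
  run sem γ s ≠ none

/-- Weak equivalence of claim sequences: whenever both are valid in a state,
they yield the same result. -/
def WeakEquiv {State Claim : Type*} (sem : Claim → State → Option State)
    (γ γ' : List Claim) : Prop :=
  ∀ s : State, Defined sem γ s → Defined sem γ' s → run sem γ s = run sem γ' s

/-- Weak independence of claims: whenever both are valid in a state, both
processing orders are valid and yield the same result. -/
def WeakIndep {State Claim : Type*} (sem : Claim → State → Option State)
    (c c' : Claim) : Prop :=
  ∀ s : State, sem c s ≠ none → sem c' s ≠ none →
    Defined sem [c, c'] s ∧ Defined sem [c', c] s ∧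
      run sem [c, c'] s = run sem [c', c] s

/-- The reduct (filtering) of a claim sequence by an address: the sublist of
claims issued by that address, in order. -/
def reduct {Claim Address : Type*} [DecidableEq Address] (addr : Claim → Address)
    (γ : List Claim) (a : Address) : List Claim :=
  γ.filter (fun c => decide (addr c = a))

/-- Interleaving equivalence: the reducts by every address coincide. -/
def InterEquiv {Claim Address : Type*} [DecidableEq Address] (addr : Claim → Address)
    (γ γ' : List Claim) : Prop :=
  ∀ a : Address, reduct addr γ a = reduct addr γ' a

/-- `γ` is an interleaving cut of `γ'`: each reduct of `γ` is a prefix of the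
corresponding reduct of `γ'`. -/
def InterCut {Claim Address : Type*} [DecidableEq Address] (addr : Claim → Address)
    (γ γ' : List Claim) : Prop :=
  ∀ a : Address, reduct addr γ a <+: reduct addr γ' a

/-- `γ` is an interleaving `a`-maximal cut of `γ'`. -/
def InterMaxCut {Claim Address : Type*} [DecidableEq Address] (addr : Claim → Address)
    (a : Address) (γ γ' : List Claim) : Prop :=
  InterCut addr γ γ' ∧ reduct addr γ a = reduct addr γ' a

/-- Compatibility of claim sequences: for every address, one reduct is a
prefix of the other. -/
def Compatible {Claim Address : Type*} [DecidableEq Address] (addr : Claim → Address)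
    (γ γ' : List Claim) : Prop :=
  ∀ a : Address, reduct addr γ a <+: reduct addr γ' a ∨ reduct addr γ' a <+: reduct addr γ a


section Aux
variable {State Claim Address : Type*} [DecidableEq Address]

lemma run_append (sem : Claim → State → Option State) (l m : List Claim) (s : State) :
    run sem (l ++ m) s = (run sem l s).bind (run sem m) := by
  induction l generalizing s with
  | nil => simp [run]
  | cons c l ih =>
    simp only [List.cons_append, run]
    cases sem c s with
    | none => simp
    | some t => simp [ih]

lemma filter_eq_cons' {α : Type*} {p : α → Bool} :
    ∀ {l : List α} {c : α} {m : List α}, l.filter p = c :: m →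
      ∃ δ δ', l = δ ++ c :: δ' ∧ (∀ x ∈ δ, p x = false) ∧ δ'.filter p = m := by
  intro l
  induction l with
  | nil => intro c m h; simp [List.filter] at h
  | cons d l ih =>
    intro c m h
    by_cases hd : p d
    · rw [List.filter_cons_of_pos hd] at h
      obtain ⟨rfl, rfl⟩ := List.cons.inj h
      exact ⟨[], l, by simp, by simp, rfl⟩
    · rw [List.filter_cons_of_neg hd] at h
      obtain ⟨δ, δ', rfl, h1, h2⟩ := ih h
      exact ⟨d :: δ, δ', rfl, by
        intro x hx
        rcases List.mem_cons.mp hx with rfl | hx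
        · simpa using hd
        · exact h1 x hx, h2⟩

lemma commute (sem : Claim → State → Option State) (addr : Claim → Address)
    (hindep : ∀ c c' : Claim, addr c ≠ addr c' → WeakIndep sem c c')
    (c : Claim) :
    ∀ (δ : List Claim) (δ' : List Claim), (∀ d ∈ δ, addr d ≠ addr c) →
      ∀ s : State, sem c s ≠ none → run sem (δ ++ c :: δ') s ≠ none →
        run sem (δ ++ c :: δ') s = run sem (c :: (δ ++ δ')) s := by
  intro δ
  induction δ with
  | nil => intro δ' _ s _ _; rfl
  | cons d δ ih =>
    intro δ' hδ s hc hdef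
    have hd : sem d s ≠ none := by
      intro hn
      apply hdef
      simp [run, hn]
    obtain ⟨t, ht⟩ := Option.ne_none_iff_exists'.mp hd
    have hrun : run sem (δ ++ c :: δ') t ≠ none := by
      intro hn; apply hdef; simp [run, ht, hn]
    have hadc : addr d ≠ addr c := hδ d List.mem_cons_self
    have hW := hindep d c hadc s hd hc
    obtain ⟨hdc, hcd, heq⟩ := hW
    have hct : sem c t ≠ none := by
      intro hn
      apply hdc
      simp [run, Defined, ht, hn] at *
    have hIH := ih δ' (fun x hx => hδ x (List.mem_cons_of_mem d hx)) t hct hrun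
    have e1 : run sem ((d :: δ) ++ c :: δ') s
        = (run sem [d, c] s).bind (run sem (δ ++ δ')) :=
      calc run sem ((d :: δ) ++ c :: δ') s
          = run sem (δ ++ c :: δ') t := by simp [run, ht]
        _ = run sem (c :: (δ ++ δ')) t := hIH
        _ = (sem c t).bind (run sem (δ ++ δ')) := by simp [run]
        _ = (run sem [d, c] s).bind (run sem (δ ++ δ')) := by
              cases htc : sem c t <;> simp [run, ht, htc]
    have e2 : run sem (c :: ((d :: δ) ++ δ')) s
        = (run sem [c, d] s).bind (run sem (δ ++ δ')) :=
      run_append sem [c, d] (δ ++ δ') s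
    rw [e1, e2, heq]

lemma main_aux (sem : Claim → State → Option State) (addr : Claim → Address)
    (hindep : ∀ c c' : Claim, addr c ≠ addr c' → WeakIndep sem c c') :
    ∀ (γ γ' : List Claim), InterEquiv addr γ γ' →
      ∀ s : State, Defined sem γ s → Defined sem γ' s → run sem γ s = run sem γ' s := by
  intro γ
  induction γ with
  | nil =>
    intro γ' h s _ _
    cases γ' with
    | nil => rfl
    | cons c tl =>
      exfalso
      have := h (addr c)
      simp [reduct, List.filter] at this
  | cons c rest ih =>
    intro γ' h s hdγ hdγ'
    have hc0 := h (addr c)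
    rw [show reduct addr (c :: rest) (addr c) = c :: reduct addr rest (addr c) by
      simp [reduct]] at hc0
    obtain ⟨δ, δ', rfl, hδf, hδ'f⟩ := filter_eq_cons' hc0.symm
    have hδ : ∀ d ∈ δ, addr d ≠ addr c := by
      intro d hd
      have := hδf d hd
      simpa using this
    have hcs : sem c s ≠ none := by
      intro hn
      apply hdγ
      simp [run, Defined, hn]
    obtain ⟨u, hu⟩ := Option.ne_none_iff_exists'.mp hcs
    have hrest : run sem rest u ≠ none := by
      intro hn; apply hdγ; simp [run, Defined, hu, hn]
    have hcomm := commute sem addr hindep c δ δ' hδ s hcs hdγ'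
    have hδδ' : run sem (δ ++ δ') u ≠ none := by
      intro hn
      apply hdγ'
      show run sem (δ ++ c :: δ') s = none
      rw [hcomm]
      simp [run, hu, hn]
    have hIE : InterEquiv addr rest (δ ++ δ') := by
      intro a
      by_cases ha : a = addr c
      · subst ha
        show reduct addr rest (addr c) = _
        have : reduct addr δ (addr c) = [] := by
          simp only [reduct, List.filter_eq_nil_iff]
          intro x hx
          simpa using hδ x hx
        simp only [reduct, List.filter_append] at *
        rw [this]
        simp [hδ'f]
      · have h1 : reduct addr (c :: rest) a = reduct addr rest a := by
          simp [reduct, List.filter_cons, Ne.symm ha]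
        have h2 : reduct addr (δ ++ c :: δ') a = reduct addr (δ ++ δ') a := by
          simp [reduct, List.filter_append, List.filter_cons, Ne.symm ha]
        have := h a
        rw [h1, h2] at this
        exact this
    have hIHr := ih (δ ++ δ') hIE u hrest hδδ'
    calc run sem (c :: rest) s = run sem rest u := by simp [run, hu]
      _ = run sem (δ ++ δ') u := hIHr
      _ = run sem (c :: (δ ++ δ')) s := by simp [run, hu]
      _ = run sem (δ ++ c :: δ') s := hcomm.symm

end Aux

theorem fastset_determinism {State Claim Address : Type*} [DecidableEq Address]
    (sem : Claim → State → Option State) (addr : Claim → Address)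
    (hindep : ∀ c c' : Claim, addr c ≠ addr c' → WeakIndep sem c c')
    (γ γ' : List Claim) (h : InterEquiv addr γ γ') :
    WeakEquiv sem γ γ' ∧
      ∀ s : State, Defined sem γ s → Defined sem γ' s → run sem γ s = run sem γ' s := by
  exact ⟨main_aux sem addr hindep γ γ' h, main_aux sem addr hindep γ γ' h⟩
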